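/- Let n and k be integers with n ≥ 2 and k ≥ 2. There exists an integer c such that n + k − n·k·c = 1 or n + k − n·k·c = −1 if and only if (n,k) = (2,3) or (n,k) = (3,2). -/

import Mathlib

/-!
Since `n + k - 1 ≤ n * k * c ≤ n + k + 1 < 2 * n * k`, the only candidate is `c = 1`.
As `(n - 1) * (k - 1) = 1 - (n + k - n * k)`, the equation then says `(n - 1) * (k - 1)`
is `0` or `2`, and a product of two positive integers equal to `2` has factors `{1, 2}`.
-/

namespace Int

lemma eq_one_of_abs_add_sub_mul_mul_le_one {n k c : ℤ} (hn : 2 ≤ n) (hk : 2 ≤ k)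
    (h : |n + k - n * k * c| ≤ 1) : c = 1 := by
  obtain ⟨hlo, hhi⟩ := abs_le.mp h
  have hnk : 0 < n * k := by positivity
  rcases lt_trichotomy c 1 with hc | rfl | hc
  · nlinarith
  · rfl
  · nlinarith

lemma eq_two_three_of_sub_one_mul_sub_one_eq_two {n k : ℤ} (hn : 2 ≤ n) (hk : 2 ≤ k)
    (h : (n - 1) * (k - 1) = 2) : (n = 2 ∧ k = 3) ∨ (n = 3 ∧ k = 2) := by
  have hn3 : n ≤ 3 := by nlinarith
  have hk3 : k ≤ 3 := by nlinarith
  interval_cases n <;> interval_cases k <;> simp_all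

end Int

/-- Arithmetic content of the corollary: the unit tangent bundle of the
`(n,k)` orbifold embeds into `S³` iff `{n,k} = {2,3}`. -/
theorem embeds_in_S3_iff_modular (n k : ℤ) (hn : 2 ≤ n) (hk : 2 ≤ k) :
    (∃ c : ℤ, n + k - n * k * c = 1 ∨ n + k - n * k * c = -1) ↔
      ((n = 2 ∧ k = 3) ∨ (n = 3 ∧ k = 2)) := by
  constructor
  · rintro ⟨c, hc⟩
    have habs : |n + k - n * k * c| ≤ 1 := by
      rcases hc with h | h <;> simp [h]
    obtain rfl := Int.eq_one_of_abs_add_sub_mul_mul_le_one hn hk habs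
    have hfactor : (n - 1) * (k - 1) = 1 - (n + k - n * k * 1) := by ring
    have hpos : 0 < (n - 1) * (k - 1) := mul_pos (by omega) (by omega)
    refine Int.eq_two_three_of_sub_one_mul_sub_one_eq_two hn hk ?_
    rcases hc with h | h <;> rw [h] at hfactor <;> omega
  · rintro (⟨rfl, rfl⟩ | ⟨rfl, rfl⟩) <;> exact ⟨1, Or.inr (by norm_num)⟩
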